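/- Generation lemma for sums: if Γ ⊢ t + r : S, then there exist types T and R such that S ≡ T + R, Γ ⊢ t : T, and Γ ⊢ r : R. -/

import Mathlib

/-!
Induct on the size of a derivation of `Γ ⊢ 1·(…·(1·(t + r))) : P`; rule (1E) is why the chain of
`1·` has to be carried along. Apart from (+I), which gives the split directly, the last rule is (≡),
(1E), (S), (∀I) or (∀E).
For (S) the weight is `1`, so splitting every summand and regrouping splits `P`, and rule (S)
followed by (1E) types each half.
(∀I) and (∀E) act atomwise on a combination `Σᵢ αᵢ·Uᵢ` of unit types. Such a shape, with every
atom satisfying an `≡`-invariant property, is preserved by `≡`; hence if `Σᵢ αᵢ·Uᵢ ≡ T + R` then `T`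
and `R` are again such combinations, the rule applies to each of them, and the atomwise map
commutes with `≡`.
-/

/- Types of λvec_R: general types and unit types (mutual) -/
mutual
inductive UTy (S : Type) : Type where
  | uvar : ℕ → UTy S
  | arrow : UTy S → Ty S → UTy S
  | fallU : ℕ → UTy S → UTy S
  | fallG : ℕ → UTy S → UTy S
inductive Ty (S : Type) : Type where
  | unit : UTy S → Ty S
  | smul : S → Ty S → Ty S
  | add : Ty S → Ty S → Ty S
  | gvar : ℕ → Ty S
end

/- Type equivalence: the smallest congruence with the weak-module axioms -/
mutual
inductive UEquiv {S : Type} [CommRing S] : UTy S → UTy S → Prop where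
  | refl (U : UTy S) : UEquiv U U
  | symm : UEquiv U V → UEquiv V U
  | trans : UEquiv U V → UEquiv V W → UEquiv U W
  | arrow : UEquiv U V → TEquiv T R → UEquiv (.arrow U T) (.arrow V R)
  | fallU : UEquiv U V → UEquiv (.fallU X U) (.fallU X V)
  | fallG : UEquiv U V → UEquiv (.fallG X U) (.fallG X V)
inductive TEquiv {S : Type} [CommRing S] : Ty S → Ty S → Prop where
  | refl (T : Ty S) : TEquiv T T
  | symm : TEquiv T R → TEquiv R T
  | trans : TEquiv T R → TEquiv R P → TEquiv T P
  | unit : UEquiv U V → TEquiv (.unit U) (.unit V)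
  | smul : TEquiv T R → TEquiv (.smul a T) (.smul a R)
  | addL : TEquiv T R → TEquiv (.add T P) (.add R P)
  | addR : TEquiv T R → TEquiv (.add P T) (.add P R)
  | one_smul (T : Ty S) : TEquiv (.smul 1 T) T
  | smul_smul : TEquiv (.smul a (.smul b T)) (.smul (a*b) T)
  | smul_add : TEquiv (.add (.smul a T) (.smul a R)) (.smul a (.add T R))
  | add_smul : TEquiv (.add (.smul a T) (.smul b T)) (.smul (a+b) T)
  | comm : TEquiv (.add T R) (.add R T)
  | assoc : TEquiv (.add T (.add R P)) (.add (.add T R) P)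
end

/- substitution of a unit type variable by a unit type -/
mutual
def UTy.substU {S : Type} : UTy S → ℕ → UTy S → UTy S
  | .uvar m, X, A => if m = X then A else .uvar m
  | .arrow U T, X, A => .arrow (U.substU X A) (T.substU X A)
  | .fallU m U, X, A => if m = X then .fallU m U else .fallU m (U.substU X A)
  | .fallG m U, X, A => .fallG m (U.substU X A)
def Ty.substU {S : Type} : Ty S → ℕ → UTy S → Ty S
  | .unit U, X, A => .unit (U.substU X A)
  | .smul a T, X, A => .smul a (T.substU X A)
  | .add T R, X, A => .add (T.substU X A) (R.substU X A)
  | .gvar m, _, _ => .gvar m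
end

/- substitution of a general type variable by a general type -/
mutual
def UTy.substG {S : Type} : UTy S → ℕ → Ty S → UTy S
  | .uvar m, _, _ => .uvar m
  | .arrow U T, X, A => .arrow (U.substG X A) (T.substG X A)
  | .fallU m U, X, A => .fallU m (U.substG X A)
  | .fallG m U, X, A => if m = X then .fallG m U else .fallG m (U.substG X A)
def Ty.substG {S : Type} : Ty S → ℕ → Ty S → Ty S
  | .unit U, X, A => .unit (U.substG X A)
  | .smul a T, X, A => .smul a (T.substG X A)
  | .add T R, X, A => .add (T.substG X A) (R.substG X A)
  | .gvar m, X, A => if m = X then A else .gvar m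
end

/- free type variables; a variable is (false, n) for a unit variable X_n
   and (true, n) for a general variable 𝕏_n -/
mutual
def UTy.fv {S : Type} : UTy S → Set (Bool × ℕ)
  | .uvar n => {(false, n)}
  | .arrow U T => U.fv ∪ T.fv
  | .fallU n U => U.fv \ {(false, n)}
  | .fallG n U => U.fv \ {(true, n)}
def Ty.fv {S : Type} : Ty S → Set (Bool × ℕ)
  | .unit U => U.fv
  | .smul _ T => T.fv
  | .add T R => T.fv ∪ R.fv
  | .gvar n => {(true, n)}
end
/- a single substitution item: a type variable together with a type of the matching kind -/
inductive TSub (S : Type) : Type where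
  | u : ℕ → UTy S → TSub S
  | g : ℕ → Ty S → TSub S

def TSub.var {S : Type} : TSub S → Bool × ℕ
  | .u X _ => (false, X)
  | .g X _ => (true, X)

def Ty.applySub {S : Type} : Ty S → TSub S → Ty S
  | T, .u X A => T.substU X A
  | T, .g X A => T.substG X A

def UTy.applySub {S : Type} : UTy S → TSub S → UTy S
  | U, .u X A => U.substU X A
  | U, .g X A => U.substG X A

def Ty.applySubs {S : Type} (T : Ty S) (σ : List (TSub S)) : Ty S := σ.foldl Ty.applySub T
def UTy.applySubs {S : Type} (U : UTy S) (σ : List (TSub S)) : UTy S := σ.foldl UTy.applySub U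

/- ∀X.U for a variable of either kind, and iterated foralls -/
def mkForall {S : Type} (X : Bool × ℕ) (U : UTy S) : UTy S :=
  if X.1 then .fallG X.2 U else .fallU X.2 U
def mkForalls {S : Type} (Xs : List (Bool × ℕ)) (U : UTy S) : UTy S := Xs.foldr mkForall U

/- the linear combination Σᵢ αᵢ·Tᵢ represented by a (nonempty) list of pairs -/
def combo {S : Type} : List (S × Ty S) → Ty S
  | [] => .gvar 0
  | [p] => .smul p.1 p.2
  | p :: q :: L => .add (.smul p.1 p.2) (combo (q :: L))

/- sum of the scalars of a linear combination -/
def weightOf {S : Type} [CommRing S] {α : Type} (L : List (S × α)) : S := (L.map Prod.fst).sum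

/- Terms of λvec_R -/
inductive Term (S : Type) : Type where
  | var : ℕ → Term S
  | lam : ℕ → Term S → Term S
  | app : Term S → Term S → Term S
  | smul : S → Term S → Term S
  | add : Term S → Term S → Term S

/- basis terms: variables and abstractions -/
inductive IsBasis {S : Type} : Term S → Prop where
  | var : IsBasis (.var x)
  | lam : IsBasis (.lam x t)

def Term.fv {S : Type} : Term S → Set ℕ
  | .var x => {x}
  | .lam x t => t.fv \ {x}
  | .app t r => t.fv ∪ r.fv
  | .smul _ t => t.fv
  | .add t r => t.fv ∪ r.fv

/- term substitution t[b/x] -/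
def Term.subst {S : Type} : Term S → ℕ → Term S → Term S
  | .var y, x, b => if y = x then b else .var y
  | .lam y t, x, b => if y = x then .lam y t else .lam y (t.subst x b)
  | .app t r, x, b => .app (t.subst x b) (r.subst x b)
  | .smul a t, x, b => .smul a (t.subst x b)
  | .add t r, x, b => .add (t.subst x b) (r.subst x b)

/- typing contexts: partial maps from term variables to unit types -/
def Ctx (S : Type) : Type := ℕ → Option (UTy S)

def Ctx.update {S : Type} (Γ : Ctx S) (x : ℕ) (U : UTy S) : Ctx S :=
  fun y => if y = x then some U else Γ y

def Ctx.fv {S : Type} (Γ : Ctx S) : Set (Bool × ℕ) :=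
  {v | ∃ x U, Γ x = some U ∧ v ∈ UTy.fv U}

def Ctx.applySub {S : Type} (Γ : Ctx S) (s : TSub S) : Ctx S :=
  fun x => (Γ x).map (fun U => U.applySub s)
/- Sized typing judgement: `TypesN n Γ t T` means Γ ⊢ t : T has a derivation
   with n sequents. -/
inductive TypesN {S : Type} [CommRing S] : ℕ → Ctx S → Term S → Ty S → Prop where
  | ax : Γ x = some U → TypesN 1 Γ (.var x) (.unit U)
  | equiv : TypesN n Γ t T → TEquiv T R → TypesN (n+1) Γ t R
  | arrI : TypesN n (Γ.update x U) t T → TypesN (n+1) Γ (.lam x t) (.unit (.arrow U T))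
  | arrE (Xs : List (Bool × ℕ)) (U : UTy S) (L : List (S × Ty S)) (M : List (S × List (TSub S))) :
      L ≠ [] → M ≠ [] →
      (∀ q ∈ M, q.2.map TSub.var = Xs) →
      TypesN n Γ t (combo (L.map fun p => (p.1, Ty.unit (mkForalls Xs (.arrow U p.2))))) →
      TypesN m Γ r (combo (M.map fun q => (q.1, (Ty.unit U).applySubs q.2))) →
      TypesN (n+m+1) Γ (.app t r)
        (combo (L.flatMap fun p => M.map fun q => (p.1 * q.1, p.2.applySubs q.2)))
  | fallI (L : List (S × UTy S)) (X : Bool × ℕ) :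
      L ≠ [] → X ∉ Γ.fv →
      TypesN n Γ t (combo (L.map fun p => (p.1, Ty.unit p.2))) →
      TypesN (n+1) Γ t (combo (L.map fun p => (p.1, Ty.unit (mkForall X p.2))))
  | fallE (L : List (S × UTy S)) (s : TSub S) :
      L ≠ [] →
      TypesN n Γ t (combo (L.map fun p => (p.1, Ty.unit (mkForall s.var p.2)))) →
      TypesN (n+1) Γ t (combo (L.map fun p => (p.1, (Ty.unit p.2).applySub s)))
  | addI : TypesN n Γ t T → TypesN m Γ r R → TypesN (n+m+1) Γ (.add t r) (.add T R)
  | oneE : TypesN n Γ (.smul 1 t) T → TypesN (n+1) Γ t T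
  | sum (L : List (ℕ × S × Ty S)) :
      L ≠ [] →
      (∀ p ∈ L, TypesN p.1 Γ t p.2.2) →
      TypesN ((L.map Prod.fst).sum + 1) Γ (.smul (weightOf (L.map Prod.snd)) t)
        (combo (L.map Prod.snd))

/- the typing judgement Γ ⊢ t : T -/
def Types {S : Type} [CommRing S] (Γ : Ctx S) (t : Term S) (T : Ty S) : Prop :=
  ∃ n, TypesN n Γ t T

/- the relation ≺_{X,Γ} -/
inductive Prec {S : Type} [CommRing S] (Γ : Ctx S) : (Bool × ℕ) → Ty S → Ty S → Prop where
  | intro (X : Bool × ℕ) (L : List (S × UTy S)) :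
      X ∉ Γ.fv → L ≠ [] →
      TEquiv R (combo (L.map fun p => (p.1, Ty.unit p.2))) →
      TEquiv T (combo (L.map fun p => (p.1, Ty.unit (mkForall X p.2)))) →
      Prec Γ X R T
  | elim (s : TSub S) (L : List (S × UTy S)) :
      s.var ∉ Γ.fv → L ≠ [] →
      TEquiv R (combo (L.map fun p => (p.1, Ty.unit (mkForall s.var p.2)))) →
      TEquiv T (combo (L.map fun p => (p.1, (Ty.unit p.2).applySub s))) →
      Prec Γ s.var R T

/- the relation ⪯_{𝒱,Γ} -/
inductive Preceq {S : Type} [CommRing S] (Γ : Ctx S) : Set (Bool × ℕ) → Ty S → Ty S → Prop where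
  | prec : V ∩ Γ.fv = ∅ → Prec Γ X R T → Preceq Γ (V ∪ {X}) R T
  | trans : Preceq Γ V₁ A B → Preceq Γ V₂ B C → Preceq Γ (V₁ ∪ V₂) A C
  | equiv : V ∩ Γ.fv = ∅ → TEquiv R T → Preceq Γ V R T

/- the reduction relation → -/
inductive Step {S : Type} [CommRing S] : Term S → Term S → Prop where
  -- Group E
  | oneSmul : Step (.smul 1 t) t
  | smulSmul : Step (.smul a (.smul b t)) (.smul (a*b) t)
  | smulAdd : Step (.smul a (.add t r)) (.add (.smul a t) (.smul a r))
  -- Group F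
  | factor : Step (.add (.smul a t) (.smul b t)) (.smul (a+b) t)
  | factorOne : Step (.add (.smul a t) t) (.smul (a+1) t)
  | factorNone : Step (.add t t) (.smul (1+1) t)
  -- Group B
  | beta : IsBasis b → Step (.app (.lam x t) b) (t.subst x b)
  -- Group A
  | appAddL : Step (.app (.add t r) u) (.add (.app t u) (.app r u))
  | appAddR : Step (.app t (.add r u)) (.add (.app t r) (.app t u))
  | appSmulL : Step (.app (.smul a t) r) (.smul a (.app t r))
  | appSmulR : Step (.app t (.smul a r)) (.smul a (.app t r))
  -- contextual rules
  | ctxSmul : Step t r → Step (.smul a t) (.smul a r)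
  | ctxAddR : Step t r → Step (.add u t) (.add u r)
  | ctxAppR : Step t r → Step (.app u t) (.app u r)
  | ctxAppL : Step t r → Step (.app t u) (.app r u)
  | ctxLam : Step t r → Step (.lam x t) (.lam x r)

/- values: sums (in any association) of pairwise-distinct abstractions, possibly scaled -/
inductive SumOf {S : Type} : Term S → List (Term S) → Prop where
  | leaf (t : Term S) : SumOf t [t]
  | add : SumOf t L → SumOf r M → SumOf (.add t r) (L ++ M)

inductive VEntry {S : Type} : Term S → Prop where
  | lam : VEntry (.lam x t)
  | smul : VEntry (.smul a (.lam x t))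

def lamOf {S : Type} : Term S → Term S
  | .smul _ b => b
  | b => b

def IsValue {S : Type} (t : Term S) : Prop :=
  ∃ L : List (Term S), SumOf t L ∧ (∀ e ∈ L, VEntry e) ∧ (L.map lamOf).Pairwise (· ≠ ·)

/- weight of types and of terms -/
def Ty.weight {S : Type} [CommRing S] : Ty S → S
  | .unit _ => 1
  | .gvar _ => 1
  | .smul a T => a * T.weight
  | .add T R => T.weight + R.weight

def Term.weight {S : Type} [CommRing S] : Term S → S
  | .var _ => 1
  | .lam _ _ => 1
  | .app _ _ => 1
  | .smul a t => a * t.weight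
  | .add t r => t.weight + r.weight

section Atomwise

variable {S : Type}

def UTy.instantiate : TSub S → UTy S → UTy S
  | .u X A, .fallU m W => if m = X then W.substU X A else .fallU m W
  | .g X A, .fallG m W => if m = X then W.substG X A else .fallG m W
  | _, U => U

theorem UTy.instantiate_mkForall (s : TSub S) (W : UTy S) :
    Ty.unit ((mkForall s.var W).instantiate s) = (Ty.unit W).applySub s := by
  cases s <;> simp [instantiate, mkForall, TSub.var, Ty.applySub, Ty.substU, Ty.substG]

def Ty.mapUnits (g : UTy S → UTy S) : Ty S → Ty S
  | .unit U => .unit (g U)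
  | .gvar n => .gvar n
  | .smul a T => .smul a (T.mapUnits g)
  | .add T R => .add (T.mapUnits g) (R.mapUnits g)

def unitCombo (L : List (S × UTy S)) : Ty S := combo (L.map fun q => (q.1, .unit q.2))

theorem mapUnits_combo (g : UTy S → UTy S) :
    ∀ L : List (S × Ty S), (combo L).mapUnits g = combo (L.map fun p => (p.1, p.2.mapUnits g))
  | [] => rfl
  | [_] => rfl
  | _ :: q :: L => congrArg (Ty.add _) (mapUnits_combo g (q :: L))

theorem unitCombo_map (g : UTy S → UTy S) (L : List (S × UTy S)) :
    unitCombo (L.map fun q => (q.1, g q.2)) = combo (L.map fun q => (q.1, .unit (g q.2))) := by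
  simp only [unitCombo, List.map_map]
  rfl

theorem mapUnits_unitCombo (g : UTy S → UTy S) (L : List (S × UTy S)) :
    (unitCombo L).mapUnits g = unitCombo (L.map fun q => (q.1, g q.2)) := by
  simp only [unitCombo, mapUnits_combo, List.map_map]
  rfl

def Ty.AllUnits (p : UTy S → Prop) : Ty S → Prop
  | .unit U => p U
  | .gvar _ => False
  | .smul _ T => T.AllUnits p
  | .add T R => T.AllUnits p ∧ R.AllUnits p

theorem allUnits_unitCombo {p : UTy S → Prop} :
    ∀ {L : List (S × UTy S)}, L ≠ [] → (∀ q ∈ L, p q.2) → (unitCombo L).AllUnits p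
  | [_], _, h => h _ List.mem_cons_self
  | q :: _ :: _, _, h => ⟨h q List.mem_cons_self,
      allUnits_unitCombo (List.cons_ne_nil _ _) fun x hx => h x (List.mem_cons_of_mem q hx)⟩

end Atomwise

section Equivalence

variable {S : Type} [CommRing S]

theorem TEquiv.add_congr {T T' R R' : Ty S} (hT : TEquiv T T') (hR : TEquiv R R') :
    TEquiv (T.add R) (T'.add R') :=
  hT.addL.trans hR.addR

theorem TEquiv.add_add_add_comm (T R P Q : Ty S) :
    TEquiv ((T.add R).add (P.add Q)) ((T.add P).add (R.add Q)) := by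
  have h : TEquiv (R.add (P.add Q)) (P.add (R.add Q)) :=
    TEquiv.assoc.trans (TEquiv.comm.addL.trans TEquiv.assoc.symm)
  exact TEquiv.assoc.symm.trans (h.addR.trans TEquiv.assoc)

theorem combo_append {L M : List (S × Ty S)} (hL : L ≠ []) (hM : M ≠ []) :
    TEquiv (combo (L ++ M)) ((combo L).add (combo M)) := by
  induction L with
  | nil => contradiction
  | cons p L ih =>
    cases L with
    | nil =>
      cases M with
      | nil => contradiction
      | cons q M => exact .refl _
    | cons q L => exact (ih (List.cons_ne_nil _ _)).addR.trans TEquiv.assoc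

theorem smul_combo (a : S) {L : List (S × Ty S)} (hL : L ≠ []) :
    TEquiv (.smul a (combo L)) (combo (L.map fun p => (a * p.1, p.2))) := by
  induction L with
  | nil => contradiction
  | cons p L ih =>
    cases L with
    | nil => exact .smul_smul
    | cons q L =>
      exact TEquiv.smul_add.symm.trans (.add_congr .smul_smul (ih (List.cons_ne_nil _ _)))

theorem combo_map_congr {α : Type} {l : List α} {f g : α → S × Ty S}
    (h : ∀ x ∈ l, (f x).1 = (g x).1 ∧ TEquiv (f x).2 (g x).2) :
    TEquiv (combo (l.map f)) (combo (l.map g)) := by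
  induction l with
  | nil => exact .refl _
  | cons x l ih =>
    obtain ⟨hx₁, hx₂⟩ := h x List.mem_cons_self
    have hx : TEquiv (.smul (f x).1 (f x).2) (.smul (g x).1 (g x).2) := hx₁ ▸ hx₂.smul
    cases l with
    | nil => exact hx
    | cons y l => exact .add_congr hx (ih fun z hz => h z (List.mem_cons_of_mem x hz))

theorem combo_map_add {α : Type} {l : List α} (hl : l ≠ []) (a : α → S) (T R : α → Ty S) :
    TEquiv (combo (l.map fun x => (a x, (T x).add (R x))))
      ((combo (l.map fun x => (a x, T x))).add (combo (l.map fun x => (a x, R x)))) := by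
  induction l with
  | nil => contradiction
  | cons x l ih =>
    cases l with
    | nil => exact TEquiv.smul_add.symm
    | cons y l =>
      exact (TEquiv.add_congr TEquiv.smul_add.symm (ih (List.cons_ne_nil _ _))).trans
        (.add_add_add_comm _ _ _ _)

theorem UEquiv.mkForall (X : Bool × ℕ) {U V : UTy S} (h : UEquiv U V) :
    UEquiv (mkForall X U) (mkForall X V) := by
  unfold _root_.mkForall
  split_ifs
  · exact .fallG h
  · exact .fallU h

mutual
theorem UEquiv.substU (X : ℕ) (A : UTy S) {U V : UTy S} :
    UEquiv U V → UEquiv (U.substU X A) (V.substU X A)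
  | .refl _ => .refl _
  | .symm h => (h.substU X A).symm
  | .trans h₁ h₂ => (h₁.substU X A).trans (h₂.substU X A)
  | .arrow hU hT => .arrow (hU.substU X A) (hT.substU X A)
  | .fallU h => by
    simp only [UTy.substU]
    split_ifs
    · exact .fallU h
    · exact .fallU (h.substU X A)
  | .fallG h => .fallG (h.substU X A)
theorem TEquiv.substU (X : ℕ) (A : UTy S) {T R : Ty S} :
    TEquiv T R → TEquiv (T.substU X A) (R.substU X A)
  | .refl _ => .refl _
  | .symm h => (h.substU X A).symm
  | .trans h₁ h₂ => (h₁.substU X A).trans (h₂.substU X A)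
  | .unit h => .unit (h.substU X A)
  | .smul h => .smul (h.substU X A)
  | .addL h => .addL (h.substU X A)
  | .addR h => .addR (h.substU X A)
  | .one_smul _ => .one_smul _
  | .smul_smul => .smul_smul
  | .smul_add => .smul_add
  | .add_smul => .add_smul
  | .comm => .comm
  | .assoc => .assoc
end

mutual
theorem UEquiv.substG (X : ℕ) (A : Ty S) {U V : UTy S} :
    UEquiv U V → UEquiv (U.substG X A) (V.substG X A)
  | .refl _ => .refl _
  | .symm h => (h.substG X A).symm
  | .trans h₁ h₂ => (h₁.substG X A).trans (h₂.substG X A)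
  | .arrow hU hT => .arrow (hU.substG X A) (hT.substG X A)
  | .fallU h => .fallU (h.substG X A)
  | .fallG h => by
    simp only [UTy.substG]
    split_ifs
    · exact .fallG h
    · exact .fallG (h.substG X A)
theorem TEquiv.substG (X : ℕ) (A : Ty S) {T R : Ty S} :
    TEquiv T R → TEquiv (T.substG X A) (R.substG X A)
  | .refl _ => .refl _
  | .symm h => (h.substG X A).symm
  | .trans h₁ h₂ => (h₁.substG X A).trans (h₂.substG X A)
  | .unit h => .unit (h.substG X A)
  | .smul h => .smul (h.substG X A)
  | .addL h => .addL (h.substG X A)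
  | .addR h => .addR (h.substG X A)
  | .one_smul _ => .one_smul _
  | .smul_smul => .smul_smul
  | .smul_add => .smul_add
  | .add_smul => .add_smul
  | .comm => .comm
  | .assoc => .assoc
end

theorem UEquiv.instantiate (s : TSub S) {U V : UTy S} :
    UEquiv U V → UEquiv (U.instantiate s) (V.instantiate s)
  | .refl _ => .refl _
  | .symm h => (h.instantiate s).symm
  | .trans h₁ h₂ => (h₁.instantiate s).trans (h₂.instantiate s)
  | .arrow hU hT => by cases s <;> exact .arrow hU hT
  | .fallU h => by
    cases s with
    | u X A =>
      simp only [UTy.instantiate]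
      split_ifs
      · exact h.substU X A
      · exact .fallU h
    | g => exact .fallU h
  | .fallG h => by
    cases s with
    | u => exact .fallG h
    | g X A =>
      simp only [UTy.instantiate]
      split_ifs
      · exact h.substG X A
      · exact .fallG h

theorem TEquiv.mapUnits {g : UTy S → UTy S} (hg : ∀ {U V : UTy S}, UEquiv U V → UEquiv (g U) (g V))
    {T R : Ty S} : TEquiv T R → TEquiv (T.mapUnits g) (R.mapUnits g)
  | .refl _ => .refl _
  | .symm h => (h.mapUnits hg).symm
  | .trans h₁ h₂ => (h₁.mapUnits hg).trans (h₂.mapUnits hg)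
  | .unit h => .unit (hg h)
  | .smul h => .smul (h.mapUnits hg)
  | .addL h => .addL (h.mapUnits hg)
  | .addR h => .addR (h.mapUnits hg)
  | .one_smul _ => .one_smul _
  | .smul_smul => .smul_smul
  | .smul_add => .smul_add
  | .add_smul => .add_smul
  | .comm => .comm
  | .assoc => .assoc

theorem unitCombo_map_congr {L : List (S × UTy S)} {g h : S × UTy S → UTy S}
    (hgh : ∀ q ∈ L, UEquiv (g q) (h q)) :
    TEquiv (unitCombo (L.map fun q => (q.1, g q))) (unitCombo (L.map fun q => (q.1, h q))) := by
  simp only [unitCombo, List.map_map]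
  exact combo_map_congr fun q hq => ⟨rfl, .unit (hgh q hq)⟩

theorem TEquiv.allUnits_iff {p : UTy S → Prop} (hp : ∀ {U V : UTy S}, UEquiv U V → (p U ↔ p V))
    {T R : Ty S} : TEquiv T R → (T.AllUnits p ↔ R.AllUnits p)
  | .refl _ => .rfl
  | .symm h => (h.allUnits_iff hp).symm
  | .trans h₁ h₂ => (h₁.allUnits_iff hp).trans (h₂.allUnits_iff hp)
  | .unit h => hp h
  | .smul h => h.allUnits_iff hp
  | .addL h => and_congr_left' (h.allUnits_iff hp)
  | .addR h => and_congr_right' (h.allUnits_iff hp)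
  | .one_smul _ => .rfl
  | .smul_smul => .rfl
  | .smul_add => .rfl
  | .add_smul => and_self_iff
  | .comm => and_comm
  | .assoc => and_assoc.symm

theorem exists_unitCombo_of_allUnits {p : UTy S → Prop} :
    ∀ {T : Ty S}, T.AllUnits p →
      ∃ L : List (S × UTy S), L ≠ [] ∧ (∀ q ∈ L, p q.2) ∧ TEquiv T (unitCombo L)
  | .unit U, h =>
    ⟨[(1, U)], List.cons_ne_nil _ _, by simpa [Ty.AllUnits] using h, (TEquiv.one_smul _).symm⟩
  | .smul a T, h => by
    obtain ⟨L, hL, hp, hT⟩ := exists_unitCombo_of_allUnits (T := T) h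
    refine ⟨L.map fun q => (a * q.1, q.2), by simpa using hL, List.forall_mem_map.2 hp, ?_⟩
    have := smul_combo a (L := L.map fun q => (q.1, .unit q.2)) (by simpa using hL)
    exact hT.smul.trans (by simpa only [unitCombo, List.map_map, Function.comp_def] using this)
  | .add T R, ⟨hT, hR⟩ => by
    obtain ⟨L, hL, hpL, hTL⟩ := exists_unitCombo_of_allUnits hT
    obtain ⟨M, hM, hpM, hRM⟩ := exists_unitCombo_of_allUnits hR
    refine ⟨L ++ M, by simp [hL], fun q hq => (List.mem_append.1 hq).elim (hpL q) (hpM q), ?_⟩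
    have := combo_append (L := L.map fun q => (q.1, .unit q.2))
      (M := M.map fun q => (q.1, .unit q.2)) (by simpa using hL) (by simpa using hM)
    rw [← List.map_append] at this
    exact (TEquiv.add_congr hTL hRM).trans this.symm

end Equivalence

section Typing

variable {S : Type} [CommRing S] {Γ : Ctx S}

theorem Types.equiv {w : Term S} {T R : Ty S} (h : Types Γ w T) (e : TEquiv T R) :
    Types Γ w R :=
  let ⟨n, d⟩ := h
  ⟨n + 1, .equiv d e⟩

theorem Types.combo {w : Term S} {L : List (S × Ty S)} (hL : L ≠ []) (hw : weightOf L = 1)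
    (h : ∀ p ∈ L, Types Γ w p.2) : Types Γ w (combo L) := by
  choose! size hsize using h
  have d := TypesN.sum (L.map fun p => (size p, p)) (by simpa using hL)
    (List.forall_mem_map.2 hsize)
  simp only [List.map_map, Function.comp_def, List.map_id', hw] at d
  exact ⟨_, .oneE d⟩

theorem Types.mapUnits {p : UTy S → Prop} {g : UTy S → UTy S}
    (hg : ∀ {U V : UTy S}, UEquiv U V → UEquiv (g U) (g V))
    {w : Term S} (hrule : ∀ L : List (S × UTy S), L ≠ [] → (∀ q ∈ L, p q.2) →
      Types Γ w (unitCombo L) → Types Γ w (unitCombo (L.map fun q => (q.1, g q.2))))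
    {T : Ty S} (hT : T.AllUnits p) (h : Types Γ w T) : Types Γ w (T.mapUnits g) := by
  obtain ⟨L, hL, hpL, hTL⟩ := exists_unitCombo_of_allUnits hT
  have hgT : TEquiv ((unitCombo L).mapUnits g) (T.mapUnits g) := (hTL.mapUnits hg).symm
  rw [mapUnits_unitCombo] at hgT
  exact (hrule L hL hpL (h.equiv hTL)).equiv hgT

theorem Types.forallIntro {X : Bool × ℕ} (hX : X ∉ Γ.fv) {w : Term S} {L : List (S × UTy S)}
    (hL : L ≠ []) (h : Types Γ w (unitCombo L)) :
    Types Γ w (unitCombo (L.map fun q => (q.1, mkForall X q.2))) := by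
  obtain ⟨n, d⟩ := h
  rw [unitCombo_map]
  exact ⟨n + 1, .fallI L X hL hX d⟩

theorem Types.forallElim (s : TSub S) {w : Term S} {L : List (S × UTy S)} (hL : L ≠ [])
    (hs : ∀ q ∈ L, ∃ W, UEquiv q.2 (mkForall s.var W)) (h : Types Γ w (unitCombo L)) :
    Types Γ w (unitCombo (L.map fun q => (q.1, q.2.instantiate s))) := by
  have : Nonempty (UTy S) := ⟨.uvar 0⟩
  choose! W hW using hs
  have h' : Types Γ w (unitCombo (L.map fun q => (q.1, mkForall s.var (W q)))) := by
    refine h.equiv ?_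
    simpa only [List.map_id'] using unitCombo_map_congr (g := Prod.snd) hW
  obtain ⟨n, d⟩ := h'
  have d' := TypesN.fallE (L.map fun q => (q.1, W q)) s (by simpa using hL)
    (by simpa only [unitCombo, List.map_map, Function.comp_def] using d)
  refine ⟨n + 1 + 1, .equiv d' ?_⟩
  simpa only [unitCombo, List.map_map, Function.comp_def, UTy.instantiate_mkForall] using
    unitCombo_map_congr (g := fun q => (mkForall s.var (W q)).instantiate s)
    fun q hq => ((hW q hq).instantiate s).symm

end Typing

section Generation

variable {S : Type} [CommRing S] {Γ : Ctx S} {t r : Term S}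

def SplitsAsSum (Γ : Ctx S) (t r : Term S) (P : Ty S) : Prop :=
  ∃ T R : Ty S, TEquiv P (.add T R) ∧ Types Γ t T ∧ Types Γ r R

theorem SplitsAsSum.equiv {P Q : Ty S} (h : SplitsAsSum Γ t r P) (e : TEquiv P Q) :
    SplitsAsSum Γ t r Q :=
  let ⟨T, R, hP, ht, hr⟩ := h
  ⟨T, R, e.symm.trans hP, ht, hr⟩

theorem SplitsAsSum.combo {L : List (S × Ty S)} (hL : L ≠ []) (hw : weightOf L = 1)
    (h : ∀ p ∈ L, SplitsAsSum Γ t r p.2) : SplitsAsSum Γ t r (combo L) := by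
  have : Nonempty (Ty S) := ⟨.gvar 0⟩
  choose! T R hTR ht hr using h
  have hw' (F : S × Ty S → Ty S) : weightOf (L.map fun p => (p.1, F p)) = 1 := by
    simpa only [weightOf, List.map_map, Function.comp_def] using hw
  refine ⟨_root_.combo (L.map fun p => (p.1, T p)), _root_.combo (L.map fun p => (p.1, R p)),
    ?_, .combo (by simpa using hL) (hw' T) ?_, .combo (by simpa using hL) (hw' R) ?_⟩
  · have hsplit :
        TEquiv (_root_.combo L) (_root_.combo (L.map fun p => (p.1, (T p).add (R p)))) := by
      simpa only [List.map_id] using combo_map_congr (f := id)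
        (g := fun p => (p.1, (T p).add (R p))) fun p hp => ⟨rfl, hTR p hp⟩
    exact hsplit.trans (combo_map_add hL _ _ _)
  · exact List.forall_mem_map.2 ht
  · exact List.forall_mem_map.2 hr

theorem SplitsAsSum.mapUnits {p : UTy S → Prop} {g : UTy S → UTy S}
    (hp : ∀ {U V : UTy S}, UEquiv U V → (p U ↔ p V))
    (hg : ∀ {U V : UTy S}, UEquiv U V → UEquiv (g U) (g V))
    (hrule : ∀ (w : Term S) (L : List (S × UTy S)), L ≠ [] → (∀ q ∈ L, p q.2) →
      Types Γ w (unitCombo L) → Types Γ w (unitCombo (L.map fun q => (q.1, g q.2))))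
    {P : Ty S} (hP : P.AllUnits p) (h : SplitsAsSum Γ t r P) :
    SplitsAsSum Γ t r (P.mapUnits g) := by
  obtain ⟨T, R, hPTR, ht, hr⟩ := h
  obtain ⟨hT, hR⟩ : T.AllUnits p ∧ R.AllUnits p := (hPTR.allUnits_iff hp).1 hP
  exact ⟨T.mapUnits g, R.mapUnits g, hPTR.mapUnits hg, ht.mapUnits hg (hrule t) hT,
    hr.mapUnits hg (hrule r) hR⟩

inductive OneSmulChain (u : Term S) : Term S → Prop where
  | refl : OneSmulChain u u
  | smul {v : Term S} : OneSmulChain u v → OneSmulChain u (.smul 1 v)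

theorem OneSmulChain.of_smul_add {a : S} {v : Term S} (h : OneSmulChain (.add t r) (.smul a v)) :
    a = 1 ∧ OneSmulChain (.add t r) v := by
  cases h with
  | smul h => exact ⟨rfl, h⟩

theorem splitsAsSum_of_typesN {n : ℕ} {u : Term S} {P : Ty S} (h : TypesN n Γ u P)
    (hu : OneSmulChain (.add t r) u) : SplitsAsSum Γ t r P := by
  induction n using Nat.strong_induction_on generalizing u P with
  | _ n ih =>
  cases h with
  | ax => cases hu
  | arrI => cases hu
  | arrE => cases hu
  | equiv d e => exact (ih _ (Nat.lt_succ_self _) d hu).equiv e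
  | addI d₁ d₂ =>
    cases hu
    exact ⟨_, _, .refl _, ⟨_, d₁⟩, ⟨_, d₂⟩⟩
  | oneE d => exact ih _ (Nat.lt_succ_self _) d hu.smul
  | fallI L X hL hX d =>
    have h := (ih _ (Nat.lt_succ_self _) d hu).mapUnits (p := fun _ => True) (g := mkForall X)
      (fun _ => .rfl) (.mkForall X) (fun _ _ hL' _ => .forallIntro hX hL')
      (allUnits_unitCombo hL fun _ _ => trivial)
    rwa [mapUnits_unitCombo, unitCombo_map] at h
  | fallE L s hL d =>
    have hinv : ∀ {U V : UTy S}, UEquiv U V →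
        ((∃ W, UEquiv U (mkForall s.var W)) ↔ ∃ W, UEquiv V (mkForall s.var W)) := fun e =>
      ⟨fun ⟨W, hW⟩ => ⟨W, e.symm.trans hW⟩, fun ⟨W, hW⟩ => ⟨W, e.trans hW⟩⟩
    have h := ih _ (Nat.lt_succ_self _) d hu
    rw [← unitCombo_map (mkForall s.var)] at h
    have h' := h.mapUnits hinv (.instantiate s) (fun _ _ => .forallElim s)
      (allUnits_unitCombo (by simpa using hL) (List.forall_mem_map.2 fun q _ => ⟨q.2, .refl _⟩))
    rw [mapUnits_unitCombo, unitCombo_map] at h'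
    simpa only [List.map_map, Function.comp_def, UTy.instantiate_mkForall] using h'
  | sum L hL d =>
    obtain ⟨hw, hu⟩ := hu.of_smul_add
    refine .combo (by simpa using hL) hw (List.forall_mem_map.2 fun p hp => ?_)
    exact ih p.1 (Nat.lt_succ_of_le (List.le_sum_of_mem (List.mem_map_of_mem hp))) (d p hp) hu

end Generation

theorem generation_sums {S : Type} [CommRing S]
    (Γ : Ctx S) (t r : Term S) (P : Ty S)
    (h : Types Γ (.add t r) P) :
    ∃ T R : Ty S, TEquiv P (.add T R) ∧ Types Γ t T ∧ Types Γ r R :=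
  let ⟨_, d⟩ := h
  splitsAsSum_of_typesN d .refl
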